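/- Let S : ℝ₊ × D → D be a Lipschitz semigroup on a metric space (D, d) with Lipschitz constant L (i.e. d(S_t u, S_t u') ≤ L·d(u, u') and d(S_t u, S_s u) ≤ L·|t − s| for all u, u' ∈ D, s, t ≥ 0, plus the semigroup property). Let w : [0,T] → D be Lipschitz continuous. Then d(w(t), S_t w(0)) ≤ L·∫₀ᵗ liminf_{h→0+} (1/h)·d(w(s+h), S_h w(s)) ds for every t ∈ [0,T]. -/

import Mathlib

/-!
For fixed `t`, put `g s = d(S_{t-s} w(s), S_t w(0))`, so that `g 0 = 0` and `g t` is the left-hand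
side. Writing `S_{t-a} = S_{t-b} ∘ S_{b-a}` gives `|g b - g a| ≤ L·d(w(b), S_{b-a} w(a))` for
`a ≤ b`; hence `g` is Lipschitz, so absolutely continuous, and wherever `g` is differentiable its
derivative, a right limit of difference quotients, is at most `L` times the liminf in the integrand.
Integrating `g'` over `[0, t]` gives the estimate. The integrand is measurable because, the
quotient being continuous in `h`, its liminf may be computed along rational `h`.
-/

open Set Filter Topology MeasureTheory

section LiminfNhdsGT

variable {β : Type*} [ConditionallyCompleteLinearOrder β] [TopologicalSpace β] [OrderTopology β]

theorem liminf_nhdsGT_eq_liminf_ratCast {u : ℝ → β} {a b : ℝ} (hab : a < b)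
    (hu : ContinuousOn u (Ioo a b)) :
    liminf u (𝓝[>] a) = liminf (fun q : ℚ => u q) (comap (↑) (𝓝[>] a)) := by
  simp only [liminf_eq, eventually_comap]
  congr 1
  ext y
  simp only [mem_ofPred_eq]
  refine ⟨fun h => h.mono fun x hx q hq => hq ▸ hx, fun h => ?_⟩
  obtain ⟨c, hc, hsub⟩ :=
    mem_nhdsGT_iff_exists_Ioo_subset.1 (inter_mem h (Ioo_mem_nhdsGT hab))
  filter_upwards [Ioo_mem_nhdsGT hc] with x hx
  have hx_closure : x ∈ closure (Ioo a c ∩ range ((↑) : ℚ → ℝ)) :=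
    Rat.denseRange_cast.open_subset_closure_inter isOpen_Ioo hx
  refine continuousWithinAt_const.closure_le hx_closure
    ((hu x (hsub hx).2).mono fun z hz => (hsub hz.1).2) ?_
  rintro _ ⟨hz, q, rfl⟩
  exact (hsub hz).1 q rfl

variable [MeasurableSpace β] [BorelSpace β] [SecondCountableTopology β]

theorem measurable_liminf_nhdsGT {α : Type*} [MeasurableSpace α] {f : α → ℝ → β} {a : ℝ}
    (hmeas : ∀ h > a, Measurable fun x => f x h) (hcont : ∀ x, ContinuousOn (f x) (Ioi a)) :
    Measurable fun x => liminf (f x) (𝓝[>] a) := by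
  obtain ⟨s, hs⟩ := (𝓝[>] a).exists_antitone_basis
  have hbasis : (comap ((↑) : ℚ → ℝ) (𝓝[>] a)).HasCountableBasis (fun _ : ℕ => True)
      fun n => (↑) ⁻¹' s n :=
    ⟨hs.toHasBasis.comap _, to_countable _⟩
  have hpos : ∀ᶠ q : ℚ in comap (↑) (𝓝[>] a), a < q :=
    tendsto_comap.eventually self_mem_nhdsWithin
  -- the values `f x h` with `h ≤ a` do not affect the liminf and need not be measurable
  let g : ℚ → α → β := fun q x => if a < q then f x q else f x (a + 1)
  have hg : ∀ q, Measurable (g q) := fun q => by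
    by_cases hq : a < (q : ℝ)
    · simpa only [g, if_pos hq] using hmeas q hq
    · simpa only [g, if_neg hq] using hmeas (a + 1) (lt_add_one a)
  convert Measurable.liminf' hg hbasis (fun _ => to_countable _) using 2 with x
  rw [liminf_nhdsGT_eq_liminf_ratCast (lt_add_one a) ((hcont x).mono Ioo_subset_Ioi_self)]
  exact liminf_congr (hpos.mono fun q hq => (if_pos hq).symm)

end LiminfNhdsGT

theorem liminf_mem_Icc_of_eventually {ι : Type*} {F : Filter ι} [F.NeBot] {u : ι → ℝ}
    {m M : ℝ} (h : ∀ᶠ i in F, u i ∈ Icc m M) : liminf u F ∈ Icc m M :=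
  have hle : ∀ᶠ i in F, u i ≤ M := h.mono fun _ hi => hi.2
  have hge : ∀ᶠ i in F, m ≤ u i := h.mono fun _ hi => hi.1
  ⟨le_liminf_of_le (isBoundedUnder_of_eventually_le hle).isCoboundedUnder_ge hge,
    liminf_le_of_frequently_le hle.frequently (isBoundedUnder_of_eventually_ge hge)⟩

theorem le_mul_liminf_of_tendsto {ι : Type*} {F : Filter ι} [F.NeBot] {φ ψ : ι → ℝ}
    {c L : ℝ} (hL : 0 ≤ L) (hφ : Tendsto φ F (𝓝 c)) (hle : ∀ᶠ i in F, φ i ≤ L * ψ i)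
    (hψ : IsBoundedUnder (· ≤ ·) F ψ) (hψ' : IsBoundedUnder (· ≥ ·) F ψ) :
    c ≤ L * liminf ψ F := by
  have hmono : Monotone (L * ·) := monotone_mul_left_of_nonneg hL
  rw [← hφ.liminf_eq, hmono.map_liminf_of_continuousAt ψ (continuous_const_mul L).continuousAt
    hψ.isCoboundedUnder_ge hψ']
  exact liminf_le_liminf hle hφ.isBoundedUnder_ge (hψ.isBoundedUnder hmono).isCoboundedUnder_ge

structure IsLipschitzSemigroup {D : Type*} [MetricSpace D] (S : ℝ → D → D) (L : ℝ) :
    Prop where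
  zero : ∀ u, S 0 u = u
  semigroup : ∀ s ≥ (0:ℝ), ∀ t ≥ (0:ℝ), ∀ u, S t (S s u) = S (t + s) u
  dist_le : ∀ t ≥ (0:ℝ), ∀ u u', dist (S t u) (S t u') ≤ L * dist u u'
  dist_time_le : ∀ s ≥ (0:ℝ), ∀ t ≥ (0:ℝ), ∀ u, dist (S t u) (S s u) ≤ L * |t - s|

namespace IsLipschitzSemigroup

variable {D : Type*} [MetricSpace D] {S : ℝ → D → D} {L : ℝ}

theorem dist_apply_le (hS : IsLipschitzSemigroup S L) {h : ℝ} (hh : 0 ≤ h) (u : D) :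
    dist u (S h u) ≤ L * h := by
  simpa [hS.zero, abs_of_nonneg hh] using hS.dist_time_le h hh 0 le_rfl u

theorem continuous_apply (hS : IsLipschitzSemigroup S L) {h : ℝ} (hh : 0 ≤ h) :
    Continuous (S h) :=
  (LipschitzWith.of_dist_le_mul fun u u' => (hS.dist_le h hh u u').trans
    (mul_le_mul_of_nonneg_right L.le_coe_toNNReal dist_nonneg)).continuous

theorem continuousOn_apply_time (hS : IsLipschitzSemigroup S L) (u : D) :
    ContinuousOn (fun h => S h u) (Ici 0) :=
  (LipschitzOnWith.of_dist_le_mul fun h hh h' hh' => (hS.dist_time_le h' hh' h hh u).trans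
    (mul_le_mul_of_nonneg_right L.le_coe_toNNReal (abs_nonneg _))).continuousOn

theorem dist_local_error_le (hS : IsLipschitzSemigroup S L) {w : ℝ → D} {K : NNReal}
    {I : Set ℝ} (hw : LipschitzOnWith K w I) {a b : ℝ} (ha : a ∈ I) (hb : b ∈ I)
    (hab : a ≤ b) :
    dist (w b) (S (b - a) (w a)) ≤ (K + L) * (b - a) := by
  have hwab : dist (w b) (w a) ≤ K * (b - a) := by
    simpa [Real.dist_eq, abs_of_nonneg (sub_nonneg.2 hab)] using hw.dist_le_mul b hb a ha
  calc dist (w b) (S (b - a) (w a))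
      ≤ dist (w b) (w a) + dist (w a) (S (b - a) (w a)) := dist_triangle _ _ _
    _ ≤ K * (b - a) + L * (b - a) := add_le_add hwab (hS.dist_apply_le (sub_nonneg.2 hab) _)
    _ = (K + L) * (b - a) := by ring

theorem eventually_local_error_mem_Icc (hS : IsLipschitzSemigroup S L) {w : ℝ → D}
    {K : NNReal} {t x : ℝ} (hw : LipschitzOnWith K w (Icc 0 t)) (hx : x ∈ Ico 0 t) :
    ∀ᶠ h in 𝓝[>] 0, dist (w (x + h)) (S h (w x)) / h ∈ Icc 0 (K + L) := by
  filter_upwards [Ioo_mem_nhdsGT (sub_pos.2 hx.2)] with h hh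
  have hxh : x + h ∈ Icc 0 t := ⟨by linarith [hx.1, hh.1], by linarith [hh.2]⟩
  refine ⟨div_nonneg dist_nonneg hh.1.le, (div_le_iff₀ hh.1).2 ?_⟩
  simpa using hS.dist_local_error_le hw (Ico_subset_Icc_self hx) hxh (by linarith [hh.1])

theorem abs_dist_apply_sub_le (hS : IsLipschitzSemigroup S L) {a b t : ℝ} (hab : a ≤ b)
    (hbt : b ≤ t) (x y p : D) :
    |dist (S (t - b) x) p - dist (S (t - a) y) p| ≤ L * dist x (S (b - a) y) := by
  have hsplit : S (t - a) y = S (t - b) (S (b - a) y) := by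
    rw [hS.semigroup _ (sub_nonneg.2 hab) _ (sub_nonneg.2 hbt)]
    ring_nf
  rw [hsplit]
  exact (abs_dist_sub_le _ _ p).trans (hS.dist_le _ (sub_nonneg.2 hbt) _ _)

theorem lipschitzOnWith_dist_apply (hS : IsLipschitzSemigroup S L) (hL : 0 ≤ L) {w : ℝ → D}
    {K : NNReal} {t : ℝ} (hw : LipschitzOnWith K w (Icc 0 t)) (p : D) :
    LipschitzOnWith (L * (K + L)).toNNReal (fun s => dist (S (t - s) (w s)) p) (Icc 0 t) := by
  refine LipschitzOnWith.of_dist_le_mul fun b hb a ha => ?_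
  wlog hab : a ≤ b generalizing a b
  · rw [dist_comm, dist_comm b]
    exact this a ha b hb (le_of_not_ge hab)
  rw [Real.coe_toNNReal _ (by positivity), Real.dist_eq, Real.dist_eq,
    abs_of_nonneg (sub_nonneg.2 hab), mul_assoc]
  exact (hS.abs_dist_apply_sub_le hab hb.2 _ _ p).trans
    (mul_le_mul_of_nonneg_left (hS.dist_local_error_le hw ha hb hab) hL)

theorem deriv_dist_apply_le (hS : IsLipschitzSemigroup S L) (hL : 0 ≤ L) {w : ℝ → D}
    {K : NNReal} {t x : ℝ} (hw : LipschitzOnWith K w (Icc 0 t)) (hx : x ∈ Ico 0 t) (p : D)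
    (hdiff : DifferentiableAt ℝ (fun s => dist (S (t - s) (w s)) p) x) :
    deriv (fun s => dist (S (t - s) (w s)) p) x ≤
      L * liminf (fun h => dist (w (x + h)) (S h (w x)) / h) (𝓝[>] 0) := by
  have hbound := hS.eventually_local_error_mem_Icc hw hx
  refine le_mul_liminf_of_tendsto hL hdiff.hasDerivAt.tendsto_slope_zero_right ?_
    (isBoundedUnder_of_eventually_le (hbound.mono fun _ hh => hh.2))
    (isBoundedUnder_of_eventually_ge (hbound.mono fun _ hh => hh.1))
  filter_upwards [Ioo_mem_nhdsGT (sub_pos.2 hx.2)] with h hh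
  have hincr := hS.abs_dist_apply_sub_le (a := x) (b := x + h) (t := t)
    (by linarith [hh.1]) (by linarith [hh.2]) (w (x + h)) (w x) p
  rw [add_sub_cancel_left] at hincr
  rw [smul_eq_mul, inv_mul_eq_div, mul_div_assoc']
  exact div_le_div_of_nonneg_right ((le_abs_self _).trans hincr) hh.1.le

theorem measurable_liminf_local_error (hS : IsLipschitzSemigroup S L) {v : ℝ → D}
    (hv : Continuous v) :
    Measurable fun s => liminf (fun h => dist (v (s + h)) (S h (v s)) / h) (𝓝[>] 0) := by
  refine measurable_liminf_nhdsGT (fun h hh => ?_) fun s => ?_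
  · exact ((hv.comp (continuous_add_const h)).dist
      ((hS.continuous_apply hh.le).comp hv)).div_const h |>.measurable
  · refine ContinuousOn.div ?_ continuousOn_id fun h hh => hh.ne'
    exact continuous_dist.comp_continuousOn <|
      (hv.comp (continuous_const_add s)).continuousOn.prodMk
        ((hS.continuousOn_apply_time (v s)).mono Ioi_subset_Ici_self)

theorem integrableOn_liminf_local_error (hS : IsLipschitzSemigroup S L) {w : ℝ → D}
    {K : NNReal} {t : ℝ} (ht : 0 ≤ t) (hw : LipschitzOnWith K w (Icc 0 t)) :
    IntegrableOn (fun s => liminf (fun h => dist (w (s + h)) (S h (w s)) / h) (𝓝[>] 0))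
      (Ioo 0 t) := by
  -- `w` need not be measurable outside `Icc 0 t`, so pass to a continuous extension
  set v : ℝ → D := fun s => w (projIcc 0 t ht s)
  have hv : Continuous v :=
    hw.continuousOn.comp_continuous (continuous_subtype_val.comp continuous_projIcc)
      fun s => (projIcc 0 t ht s).2
  have hv_eq : EqOn v w (Icc 0 t) := fun s hs => by simp only [v, projIcc_of_mem ht hs]
  have hmeas : AEStronglyMeasurable
      (fun s => liminf (fun h => dist (w (s + h)) (S h (w s)) / h) (𝓝[>] 0))
      (volume.restrict (Ioo 0 t)) := by
    refine (hS.measurable_liminf_local_error hv).aestronglyMeasurable.congr ?_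
    refine (ae_restrict_iff' measurableSet_Ioo).2 (ae_of_all _ fun s hs => liminf_congr ?_)
    filter_upwards [Ioo_mem_nhdsGT (sub_pos.2 hs.2)] with h hh
    rw [hv_eq ⟨by linarith [hs.1, hh.1], by linarith [hh.2]⟩, hv_eq (Ioo_subset_Icc_self hs)]
  refine Integrable.of_bound hmeas (K + L) <|
    (ae_restrict_iff' measurableSet_Ioo).2 (ae_of_all _ fun s hs => ?_)
  have hmem := liminf_mem_Icc_of_eventually
    (hS.eventually_local_error_mem_Icc hw (Ioo_subset_Ico_self hs))
  rw [Real.norm_of_nonneg hmem.1]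
  exact hmem.2

end IsLipschitzSemigroup

theorem stmt16_general {D : Type*} [MetricSpace D]
    (S : ℝ → D → D) (L : ℝ) (hL : 0 ≤ L) (T : ℝ)
    (hS0 : ∀ u, S 0 u = u)
    (hSsemi : ∀ s ≥ (0:ℝ), ∀ t ≥ (0:ℝ), ∀ u, S t (S s u) = S (t + s) u)
    (hSLip : ∀ t ≥ (0:ℝ), ∀ u u', dist (S t u) (S t u') ≤ L * dist u u')
    (hStime : ∀ s ≥ (0:ℝ), ∀ t ≥ (0:ℝ), ∀ u, dist (S t u) (S s u) ≤ L * |t - s|)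
    (w : ℝ → D) (Lw : NNReal) (hw : LipschitzOnWith Lw w (Icc 0 T)) :
    ∀ t ∈ Icc (0:ℝ) T,
      dist (w t) (S t (w 0)) ≤
        L * ∫ s in (0:ℝ)..t,
          Filter.liminf (fun h => dist (w (s + h)) (S h (w s)) / h)
            (nhdsWithin 0 (Ioi 0)) := by
  rintro t ⟨ht, htT⟩
  have hS : IsLipschitzSemigroup S L := ⟨hS0, hSsemi, hSLip, hStime⟩
  have hwt := hw.mono (Icc_subset_Icc_right htT)
  set g : ℝ → ℝ := fun s => dist (S (t - s) (w s)) (S t (w 0))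
  have hg : AbsolutelyContinuousOnInterval g 0 t := by
    have hlip := hS.lipschitzOnWith_dist_apply hL hwt (S t (w 0))
    rw [← uIcc_of_le ht] at hlip
    exact hlip.absolutelyContinuousOnInterval
  have hderiv : ∀ᵐ s ∂volume.restrict (Icc 0 t), deriv g s ≤
      L * liminf (fun h => dist (w (s + h)) (S h (w s)) / h) (𝓝[>] 0) := by
    rw [← Measure.restrict_congr_set Ioo_ae_eq_Icc]
    filter_upwards [ae_restrict_mem measurableSet_Ioo, ae_restrict_of_ae hg.ae_differentiableAt]
      with s hs hdiff
    exact hS.deriv_dist_apply_le hL hwt (Ioo_subset_Ico_self hs) _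
      (hdiff (by rw [uIcc_of_le ht]; exact Ioo_subset_Icc_self hs))
  have hf := (hS.integrableOn_liminf_local_error ht hwt).const_mul L
  calc dist (w t) (S t (w 0)) = g t - g 0 := by simp [g, hS0]
    _ = ∫ s in 0..t, deriv g s := hg.integral_deriv_eq_sub.symm
    _ ≤ _ := intervalIntegral.integral_mono_ae_restrict ht hg.intervalIntegrable_deriv
        ((intervalIntegrable_iff_integrableOn_Ioo_of_le ht).2 hf) hderiv
    _ = _ := intervalIntegral.integral_const_mul _ _

/-- Bressan's error estimate: for a Lipschitz semigroup `S`
with constant `L` on a metric space `D` and a Lipschitz map `w : [0,T] → D`,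
`d(w(t), S_t w(0)) ≤ L·∫₀ᵗ liminf_{h→0⁺} d(w(s+h), S_h w(s))/h ds` for every
`t ∈ [0,T]`. -/
theorem stmt16 {D : Type*} [MetricSpace D]
    (S : ℝ → D → D) (L : ℝ) (hL : 0 ≤ L) (T : ℝ) (hT : 0 < T)
    (hS0 : ∀ u, S 0 u = u)
    (hSsemi : ∀ s ≥ (0:ℝ), ∀ t ≥ (0:ℝ), ∀ u, S t (S s u) = S (t + s) u)
    (hSLip : ∀ t ≥ (0:ℝ), ∀ u u', dist (S t u) (S t u') ≤ L * dist u u')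
    (hStime : ∀ s ≥ (0:ℝ), ∀ t ≥ (0:ℝ), ∀ u, dist (S t u) (S s u) ≤ L * |t - s|)
    (w : ℝ → D) (Lw : NNReal) (hw : LipschitzOnWith Lw w (Icc 0 T)) :
    ∀ t ∈ Icc (0:ℝ) T,
      dist (w t) (S t (w 0)) ≤
        L * ∫ s in (0:ℝ)..t,
          Filter.liminf (fun h => dist (w (s + h)) (S h (w s)) / h)
            (nhdsWithin 0 (Ioi 0)) :=
  stmt16_general S L hL T hS0 hSsemi hSLip hStime w Lw hw
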